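/- In the symmetric coercive setting (a symmetric, coercive with constant α, bounded with norm ‖a‖; b with inf-sup constant β; α₀ coercivity constant of a on K), the solution (u,p) of the mixed problem satisfies ‖u‖_V ≤ (1/α₀)‖f‖_{K'} + (1/β)(‖a‖/α)^{1/2}‖g‖_{Q'}. -/

import Mathlib

/-!
Lift `g` to some `w` with `‖w‖ ≤ ‖g‖ / β` and correct it by an element of `K = ker b` so that
the corrected lift `e` is `a`-orthogonal to `K`. Since `a` is symmetric and nonnegative on `K`,
this correction can only lower the energy, so `α ‖e‖² ≤ a e e ≤ a w w ≤ ‖a‖ ‖w‖²`. The remainder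
`u - e` lies in `K`, and testing the first equation with it gives
`α₀ ‖u - e‖² ≤ a (u - e) (u - e) = f (u - e) ≤ ‖f‖_{K'} ‖u - e‖`.
-/

open Set

/-- Dual (semi) norm of a functional `f : V → ℝ`, tested only on the subset `U`. -/
noncomputable def dualSemiNorm {V : Type*} [NormedAddCommGroup V] (U : Set V) (f : V → ℝ) : ℝ :=
  sSup ((fun v => |f v| / ‖v‖) '' (U \ {0}))

lemma le_div_of_mul_sq_le_mul {c d x : ℝ} (hc : 0 < c) (hd : 0 ≤ d) (hx : 0 ≤ x)
    (h : c * x ^ 2 ≤ d * x) : x ≤ d / c := by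
  rcases hx.eq_or_lt with rfl | hx
  · positivity
  · rw [le_div_iff₀ hc]
    nlinarith

lemma le_sqrt_div_mul_of_mul_sq_le {α M x y : ℝ} (hα : 0 < α) (hy : 0 ≤ y)
    (h : α * x ^ 2 ≤ M * y ^ 2) : x ≤ √(M / α) * y := by
  have hsq : x ^ 2 ≤ M / α * y ^ 2 := by
    rw [div_mul_eq_mul_div, le_div_iff₀ hα]
    linarith
  calc x ≤ |x| := le_abs_self x
    _ = √(x ^ 2) := (Real.sqrt_sq_eq_abs x).symm
    _ ≤ √(M / α * y ^ 2) := Real.sqrt_le_sqrt hsq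
    _ = √(M / α) * y := by rw [Real.sqrt_mul' _ (sq_nonneg y), Real.sqrt_sq hy]

lemma dualSemiNorm_nonneg {V : Type*} [NormedAddCommGroup V] (U : Set V) (f : V → ℝ) :
    0 ≤ dualSemiNorm U f :=
  Real.sSup_nonneg <| by
    rintro _ ⟨v, -, rfl⟩
    positivity

section DualSemiNorm

variable {V : Type*} [NormedAddCommGroup V] [NormedSpace ℝ V]

lemma bddAbove_image_abs_div_norm (U : Set V) (f : V →L[ℝ] ℝ) :
    BddAbove ((fun v => |f v| / ‖v‖) '' (U \ {0})) := by
  refine ⟨‖f‖, ?_⟩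
  rintro _ ⟨v, ⟨-, hv⟩, rfl⟩
  rw [div_le_iff₀ (norm_pos_iff.mpr hv)]
  exact f.le_opNorm v

lemma abs_apply_le_dualSemiNorm_mul {U : Set V} (f : V →L[ℝ] ℝ) {v : V} (hv : v ∈ U) :
    |f v| ≤ dualSemiNorm U (fun v => f v) * ‖v‖ := by
  rcases eq_or_ne v 0 with rfl | hv₀
  · simp
  · rw [← div_le_iff₀ (norm_pos_iff.mpr hv₀)]
    exact le_csSup (bddAbove_image_abs_div_norm U f) ⟨v, ⟨hv, hv₀⟩, rfl⟩

lemma norm_le_dualSemiNorm_div {U : Set V} (f : V →L[ℝ] ℝ) {c : ℝ} (hc : 0 < c) {v : V}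
    (hv : v ∈ U) (h : c * ‖v‖ ^ 2 ≤ f v) : ‖v‖ ≤ dualSemiNorm U (fun v => f v) / c :=
  le_div_of_mul_sq_le_mul hc (dualSemiNorm_nonneg U _) (norm_nonneg v)
    (h.trans ((le_abs_self _).trans (abs_apply_le_dualSemiNorm_mul f hv)))

end DualSemiNorm

section EnergyProjection

variable {V : Type*} [NormedAddCommGroup V] [InnerProductSpace ℝ V]

lemma IsCoercive.exists_forall_apply_eq [CompleteSpace V] {B : V →L[ℝ] V →L[ℝ] ℝ}
    (hB : IsCoercive B) (ℓ : V →L[ℝ] ℝ) : ∃ k : V, ∀ v, B k v = ℓ v := by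
  obtain ⟨w, rfl⟩ := (InnerProductSpace.toDual ℝ V).surjective ℓ
  refine ⟨hB.continuousLinearEquivOfBilin.symm w, fun v => ?_⟩
  rw [← hB.continuousLinearEquivOfBilin_apply, ContinuousLinearEquiv.apply_symm_apply,
    InnerProductSpace.toDual_apply_apply]

variable {a : V →L[ℝ] V →L[ℝ] ℝ} {α : ℝ}

lemma exists_sub_mem_forall_apply_eq_zero (hα : 0 < α) (hcoer : ∀ v, α * ‖v‖ ^ 2 ≤ a v v)
    {S : Submodule ℝ V} [CompleteSpace S] (w : V) :
    ∃ e, w - e ∈ S ∧ ∀ v ∈ S, a e v = 0 := by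
  have hcoerS : IsCoercive (a.bilinearComp S.subtypeL S.subtypeL) :=
    ⟨α, hα, fun v => by simpa [sq, mul_assoc] using hcoer v⟩
  obtain ⟨k, hk⟩ := hcoerS.exists_forall_apply_eq ((a w).comp S.subtypeL)
  refine ⟨w - k, by simp, fun v hv => ?_⟩
  simpa [sub_eq_zero] using (hk ⟨v, hv⟩).symm

lemma apply_self_le_apply_add_self (hsym : ∀ v w, a v w = a w v) {e k : V} (hek : a e k = 0)
    (hk : 0 ≤ a k k) : a e e ≤ a (e + k) (e + k) := by
  have hke : a k e = 0 := by rw [hsym, hek]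
  simp only [map_add, add_apply, hek, hke]
  linarith

lemma norm_le_sqrt_mul_of_forall_apply_eq_zero (hsym : ∀ v w, a v w = a w v) (hα : 0 < α)
    (hcoer : ∀ v, α * ‖v‖ ^ 2 ≤ a v v) {S : Submodule ℝ V} {w e : V} (hwe : w - e ∈ S)
    (he : ∀ v ∈ S, a e v = 0) : ‖e‖ ≤ √(‖a‖ / α) * ‖w‖ := by
  have henergy : a e e ≤ a w w := by
    simpa using apply_self_le_apply_add_self hsym (he _ hwe)
      ((hcoer (w - e)).trans' (by positivity))
  have hbound : a w w ≤ ‖a‖ * ‖w‖ ^ 2 := by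
    simpa [sq, mul_assoc] using (le_abs_self _).trans (a.le_opNorm₂ w w)
  exact le_sqrt_div_mul_of_mul_sq_le hα (norm_nonneg w)
    ((hcoer e).trans (henergy.trans hbound))

end EnergyProjection

theorem stmt6_general
    {V Q : Type*} [NormedAddCommGroup V] [InnerProductSpace ℝ V] [CompleteSpace V]
    [NormedAddCommGroup Q] [InnerProductSpace ℝ Q]
    (a : V →L[ℝ] V →L[ℝ] ℝ) (b : V →L[ℝ] Q →L[ℝ] ℝ)
    (hsym : ∀ v w : V, a v w = a w v)
    (α : ℝ) (hα : 0 < α) (hcoer : ∀ v : V, a v v ≥ α * ‖v‖ ^ 2)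
    (K : Set V) (hK : K = {v : V | ∀ q : Q, b v q = 0})
    (α₀ : ℝ) (hα₀ : α₀ ≥ α) (hcoerK : ∀ v ∈ K, a v v ≥ α₀ * ‖v‖ ^ 2)
    (β : ℝ)
    (hBsurj : ∀ h : Q →L[ℝ] ℝ, ∃ v : V, b v = h ∧ ‖v‖ ≤ (1 / β) * ‖h‖)
    (f : V →L[ℝ] ℝ) (g : Q →L[ℝ] ℝ) (u : V) (p : Q)
    (hsol1 : ∀ v : V, a u v + b v p = f v) (hsol2 : ∀ q : Q, b u q = g q) :
    ‖u‖ ≤ (1 / α₀) * dualSemiNorm K (fun v => f v)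
      + (1 / β) * Real.sqrt (‖a‖ / α) * ‖g‖ := by
  have hKker : K = (b.ker : Set V) := by
    ext v
    simp [hK, ContinuousLinearMap.ext_iff]
  have : CompleteSpace b.ker := b.isClosed_ker.completeSpace_coe
  obtain ⟨w, hbw, hw⟩ := hBsurj g
  obtain ⟨e, hwe, he⟩ := exists_sub_mem_forall_apply_eq_zero (S := b.ker) hα hcoer w
  have hbe : b e = g := by
    rw [← hbw, eq_comm, ← sub_eq_zero, ← map_sub]
    exact hwe
  have hu₀ : b (u - e) = 0 := by
    rw [map_sub, hbe, ContinuousLinearMap.ext hsol2, sub_self]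
  have hu₀K : u - e ∈ K := hKker ▸ hu₀
  have henergy : α₀ * ‖u - e‖ ^ 2 ≤ f (u - e) := by
    have hau : a u (u - e) = a (u - e) (u - e) := by
      rw [← add_zero (a (u - e) (u - e)), ← he _ hu₀, ← add_apply, ← map_add,
        sub_add_cancel]
    rw [← hsol1, hu₀, hau]
    simpa using hcoerK _ hu₀K
  calc ‖u‖ = ‖(u - e) + e‖ := by rw [sub_add_cancel]
    _ ≤ ‖u - e‖ + ‖e‖ := norm_add_le _ _
    _ ≤ dualSemiNorm K (fun v => f v) / α₀ + √(‖a‖ / α) * ((1 / β) * ‖g‖) :=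
      add_le_add (norm_le_dualSemiNorm_div f (hα.trans_le hα₀) hu₀K henergy)
        ((norm_le_sqrt_mul_of_forall_apply_eq_zero hsym hα hcoer hwe he).trans
          (mul_le_mul_of_nonneg_left hw (Real.sqrt_nonneg _)))
    _ = _ := by ring

/-- Refined stability estimate for `u` in the symmetric coercive case:
`‖u‖ ≤ (1/α₀)‖f‖_{K'} + (1/β)(‖a‖/α)^{1/2}‖g‖_{Q'}`. -/
theorem stmt6
    {V Q : Type*} [NormedAddCommGroup V] [InnerProductSpace ℝ V] [CompleteSpace V]
    [NormedAddCommGroup Q] [InnerProductSpace ℝ Q] [CompleteSpace Q]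
    (a : V →L[ℝ] V →L[ℝ] ℝ) (b : V →L[ℝ] Q →L[ℝ] ℝ)
    (hsym : ∀ v w : V, a v w = a w v)
    (α : ℝ) (hα : 0 < α) (hcoer : ∀ v : V, a v v ≥ α * ‖v‖ ^ 2)
    (K : Set V) (hK : K = {v : V | ∀ q : Q, b v q = 0})
    (α₀ : ℝ) (hα₀ : α₀ ≥ α) (hcoerK : ∀ v ∈ K, a v v ≥ α₀ * ‖v‖ ^ 2)
    (β : ℝ) (hβ : 0 < β)
    (hBsurj : ∀ h : Q →L[ℝ] ℝ, ∃ v : V, b v = h ∧ ‖v‖ ≤ (1 / β) * ‖h‖)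
    (f : V →L[ℝ] ℝ) (g : Q →L[ℝ] ℝ) (u : V) (p : Q)
    (hsol1 : ∀ v : V, a u v + b v p = f v) (hsol2 : ∀ q : Q, b u q = g q) :
    ‖u‖ ≤ (1 / α₀) * dualSemiNorm K (fun v => f v)
      + (1 / β) * Real.sqrt (‖a‖ / α) * ‖g‖ :=
  stmt6_general a b hsym α hα hcoer K hK α₀ hα₀ hcoerK β hBsurj f g u p hsol1 hsol2
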